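/- Let m, n, i be positive natural numbers and let I_1, …, I_i : {0,…,m} → {1,…,n} be nondecreasing functions encoding increasing monotonous polyominoes in R_{m×n} that are fully defined on {0,…,m} and whose cell sets are pairwise disjoint, with i ≤ n. Then the total number of cells covered by I_1, …, I_i is at most i·(m + n − i). -/

import Mathlib

/-!
Column `t` of an increasing polyomino `f` holds `f t - f (t - 1) + 1` cells, so by telescoping
the polyomino has at most `m + f m - f 0` cells. Two disjoint polyominoes cannot share the cell
`(1, f 0)` nor the cell `(m, f m)`, so the `i` starting heights are distinct values `≥ 1` and the
`i` final heights are distinct values `≤ n`. Hence the total height gain is at most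
`(n + (n - 1) + ⋯ + (n - i + 1)) - (1 + 2 + ⋯ + i) = i (n - i)`, and the cell count at most
`i m + i (n - i)`.
-/

/-- A monotonous polyomino in the lattice rectangle `R_{m×n}`, spanning columns
`r` to `s` (with `1 ≤ r ≤ s ≤ m`), encoded by a monotone function `P` taking
values in `{1,…,n}` on `{r-1,…,s}`. -/
structure MonoPoly (m n : ℕ) where
  r : ℕ
  s : ℕ
  P : ℕ → ℕ
  one_le_r : 1 ≤ r
  r_le_s : r ≤ s
  s_le_m : s ≤ m
  val_mem : ∀ t, r - 1 ≤ t → t ≤ s → 1 ≤ P t ∧ P t ≤ n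
  mono : (∀ t u, r - 1 ≤ t → t ≤ u → u ≤ s → P t ≤ P u) ∨
         (∀ t u, r - 1 ≤ t → t ≤ u → u ≤ s → P u ≤ P t)

/-- The cell set of a monotonous polyomino:
`{(t,j) : r ≤ t ≤ s, min(P(t-1),P(t)) ≤ j ≤ max(P(t-1),P(t))}`. -/
def MonoPoly.cells {m n : ℕ} (Q : MonoPoly m n) : Set (ℕ × ℕ) :=
  {c | Q.r ≤ c.1 ∧ c.1 ≤ Q.s ∧
       min (Q.P (c.1 - 1)) (Q.P c.1) ≤ c.2 ∧
       c.2 ≤ max (Q.P (c.1 - 1)) (Q.P c.1)}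

/-- A monotonous polyomino is increasing if its encoding function is
nondecreasing on `{r-1,…,s}`. -/
def MonoPoly.Increasing {m n : ℕ} (Q : MonoPoly m n) : Prop :=
  ∀ t u, Q.r - 1 ≤ t → t ≤ u → u ≤ Q.s → Q.P t ≤ Q.P u

/-- A monotonous polyomino is decreasing if its encoding function is
nonincreasing on `{r-1,…,s}`. -/
def MonoPoly.Decreasing {m n : ℕ} (Q : MonoPoly m n) : Prop :=
  ∀ t u, Q.r - 1 ≤ t → t ≤ u → u ≤ Q.s → Q.P u ≤ Q.P t

/-- A monotonous polyomino is fully defined on `{0,…,m}` if `r = 1` and `s = m`. -/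
def MonoPoly.Full {m n : ℕ} (Q : MonoPoly m n) : Prop :=
  Q.r = 1 ∧ Q.s = m

/-- `F` is a covering of `R_{m×n}` by `p` monotonous polyominoes: every cell
`(k,l)` with `1 ≤ k ≤ m`, `1 ≤ l ≤ n` belongs to some member of the family. -/
def IsCovering (m n p : ℕ) (F : Fin p → MonoPoly m n) : Prop :=
  ∀ k l : ℕ, 1 ≤ k → k ≤ m → 1 ≤ l → l ≤ n → ∃ a, (k, l) ∈ (F a).cells

/-- An `(i,d)`-covering of `R_{m×n}`: `i` increasing and `d` decreasing
monotonous polyominoes whose cell sets together cover `{1,…,m}×{1,…,n}`. -/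
def IsIDCovering (m n i d : ℕ) (F : Fin i → MonoPoly m n)
    (G : Fin d → MonoPoly m n) : Prop :=
  (∀ a, (F a).Increasing) ∧ (∀ b, (G b).Decreasing) ∧
  ∀ k l : ℕ, 1 ≤ k → k ≤ m → 1 ≤ l → l ≤ n →
    (∃ a, (k, l) ∈ (F a).cells) ∨ (∃ b, (k, l) ∈ (G b).cells)

/-- The minimal number of monotonous polyominoes needed to cover `R_{m×n}`. -/
noncomputable def minCover (m n : ℕ) : ℕ :=
  sInf {p : ℕ | ∃ F : Fin p → MonoPoly m n, IsCovering m n p F}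

/-- `m(n,i,d) ∈ ℕ∞`: the supremum of all `m` such that `R_{m×n}` admits an
`(i,d)`-covering. -/
noncomputable def mSup (n i d : ℕ) : ℕ∞ :=
  ⨆ m ∈ {m : ℕ | ∃ (F : Fin i → MonoPoly m n) (G : Fin d → MonoPoly m n),
      IsIDCovering m n i d F G}, (m : ℕ∞)

/-- `f : ℕ → ℕ` encodes an increasing monotonous polyomino in `R_{m×n}` fully
defined on `{0,…,m}`: values in `{1,…,n}` and nondecreasing on `{0,…,m}`. -/
def IncFull (m n : ℕ) (f : ℕ → ℕ) : Prop :=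
  (∀ t, t ≤ m → 1 ≤ f t ∧ f t ≤ n) ∧ (∀ t u, t ≤ u → u ≤ m → f t ≤ f u)

/-- The cell set of an increasing polyomino fully defined on `{0,…,m}`,
encoded by the nondecreasing function `f`. -/
def cellsFull (m : ℕ) (f : ℕ → ℕ) : Set (ℕ × ℕ) :=
  {c | 1 ≤ c.1 ∧ c.1 ≤ m ∧ f (c.1 - 1) ≤ c.2 ∧ c.2 ≤ f c.1}

open Finset Function

lemma IncFull.monotoneOn {m n : ℕ} {f : ℕ → ℕ} (hf : IncFull m n f) : MonotoneOn f (Set.Iic m) :=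
  fun t _ u hu htu => hf.2 t u htu hu

lemma cellsFull_eq_biUnion (m : ℕ) (f : ℕ → ℕ) :
    cellsFull m f = ↑((range m).biUnion fun t => {t + 1} ×ˢ Icc (f t) (f (t + 1))) := by
  ext ⟨k, l⟩
  simp only [cellsFull, Set.mem_ofPred_eq, coe_biUnion, mem_coe, mem_range, Set.mem_iUnion,
    mem_product, mem_singleton, mem_Icc, exists_prop]
  constructor
  · rintro ⟨hk1, hkm, hlo, hhi⟩
    obtain ⟨t, rfl⟩ : ∃ t, k = t + 1 := ⟨k - 1, by omega⟩
    exact ⟨t, by omega, rfl, hlo, hhi⟩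
  · rintro ⟨t, ht, rfl, hlo, hhi⟩
    exact ⟨by omega, by omega, hlo, hhi⟩

lemma ncard_cellsFull_le {m : ℕ} {f : ℕ → ℕ} (hf : MonotoneOn f (Set.Iic m)) :
    ((cellsFull m f).ncard : ℤ) ≤ m + f m - f 0 := by
  rw [cellsFull_eq_biUnion, Set.ncard_coe_finset]
  calc (#((range m).biUnion fun t => {t + 1} ×ˢ Icc (f t) (f (t + 1))) : ℤ)
      ≤ ∑ t ∈ range m, (#({t + 1} ×ˢ Icc (f t) (f (t + 1))) : ℤ) := by
        exact_mod_cast card_biUnion_le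
    _ = ∑ t ∈ range m, (((f (t + 1) : ℤ) - f t) + 1) := by
        refine sum_congr rfl fun t ht => ?_
        have ht : t + 1 ≤ m := mem_range.1 ht
        have hstep : f t ≤ f (t + 1) :=
          hf (Set.mem_Iic.2 (by omega)) (Set.mem_Iic.2 ht) (Nat.le_succ t)
        rw [card_product, card_singleton, one_mul, Nat.card_Icc]
        omega
    _ = m + f m - f 0 := by
        rw [sum_add_distrib, sum_range_sub (fun t => (f t : ℤ))]
        simp only [sum_const, card_range, nsmul_eq_mul, mul_one]
        ring

section Endpoints

variable {m : ℕ} {f : ℕ → ℕ}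

lemma first_mem_cellsFull (hm : 1 ≤ m) (hf : MonotoneOn f (Set.Iic m)) :
    (1, f 0) ∈ cellsFull m f :=
  ⟨le_rfl, hm, le_rfl, hf (Set.mem_Iic.2 (Nat.zero_le m)) (Set.mem_Iic.2 hm) zero_le_one⟩

lemma last_mem_cellsFull (hm : 1 ≤ m) (hf : MonotoneOn f (Set.Iic m)) :
    (m, f m) ∈ cellsFull m f :=
  ⟨hm, le_rfl, hf (Set.mem_Iic.2 (Nat.sub_le m 1)) (Set.mem_Iic.2 le_rfl) (Nat.sub_le m 1), le_rfl⟩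

end Endpoints

section Disjoint

variable {ι : Type*} {m : ℕ} {Q : ι → ℕ → ℕ}

lemma injective_apply_zero_of_pairwise_disjoint (hm : 1 ≤ m)
    (hQ : ∀ a, MonotoneOn (Q a) (Set.Iic m))
    (hdisj : Pairwise (Disjoint on fun a => cellsFull m (Q a))) :
    Injective fun a => Q a 0 := by
  intro a b hab
  by_contra hne
  refine Set.disjoint_left.1 (hdisj hne) (first_mem_cellsFull hm (hQ a)) ?_
  simpa only [hab] using first_mem_cellsFull hm (hQ b)

lemma injective_apply_last_of_pairwise_disjoint (hm : 1 ≤ m)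
    (hQ : ∀ a, MonotoneOn (Q a) (Set.Iic m))
    (hdisj : Pairwise (Disjoint on fun a => cellsFull m (Q a))) :
    Injective fun a => Q a m := by
  intro a b hab
  by_contra hne
  refine Set.disjoint_left.1 (hdisj hne) (last_mem_cellsFull hm (hQ a)) ?_
  simpa only [hab] using last_mem_cellsFull hm (hQ b)

end Disjoint

section DistinctSums

variable {ι : Type*} [Fintype ι] {g h : ι → ℤ}

lemma sum_le_sum_range_of_injective (hg : Injective g) {c : ℤ} (hc : ∀ a, g a ≤ c) :
    ∑ a, g a ≤ ∑ j ∈ range (Fintype.card ι), (c - j) :=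
  calc ∑ a, g a = ∑ x ∈ univ.image g, x := (sum_image (f := id) fun a _ b _ hab => hg hab).symm
    _ ≤ ∑ j ∈ range #(univ.image g), (c - j) := sum_le_sum_range (by simpa using hc)
    _ = ∑ j ∈ range (Fintype.card ι), (c - j) := by rw [card_image_of_injective _ hg, card_univ]

lemma sum_range_le_sum_of_injective (hh : Injective h) {d : ℤ} (hd : ∀ a, d ≤ h a) :
    ∑ j ∈ range (Fintype.card ι), (d + j) ≤ ∑ a, h a :=
  calc ∑ j ∈ range (Fintype.card ι), (d + j) = ∑ j ∈ range #(univ.image h), (d + j) := by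
        rw [card_image_of_injective _ hh, card_univ]
    _ ≤ ∑ x ∈ univ.image h, x := sum_range_le_sum (by simpa using hd)
    _ = ∑ a, h a := sum_image (f := id) fun a _ b _ hab => hh hab

lemma sum_range_sub_sub (c d : ℤ) (k : ℕ) :
    ∑ j ∈ range k, ((c - j) - (d + j)) = k * (c - d + 1 - k) := by
  induction k with
  | zero => simp
  | succ k ih =>
    rw [sum_range_succ, ih]
    push_cast
    ring

lemma sum_sub_le_of_injective (hg : Injective g) (hh : Injective h) {c d : ℤ}
    (hc : ∀ a, g a ≤ c) (hd : ∀ a, d ≤ h a) :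
    ∑ a, (g a - h a) ≤ Fintype.card ι * (c - d + 1 - Fintype.card ι) := by
  rw [sum_sub_distrib, ← sum_range_sub_sub, sum_sub_distrib]
  exact sub_le_sub (sum_le_sum_range_of_injective hg hc) (sum_range_le_sum_of_injective hh hd)

end DistinctSums

theorem stmt16_general (m n i : ℕ) (hm : 1 ≤ m) (hin : i ≤ n)
    (Q : Fin i → (ℕ → ℕ)) (hQ : ∀ a, IncFull m n (Q a))
    (hdisj : ∀ a b, a ≠ b → Disjoint (cellsFull m (Q a)) (cellsFull m (Q b))) :
    (⋃ a, cellsFull m (Q a)).ncard ≤ i * (m + n - i) := by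
  have hmono : ∀ a, MonotoneOn (Q a) (Set.Iic m) := fun a => (hQ a).monotoneOn
  have hpair : Pairwise (Disjoint on fun a => cellsFull m (Q a)) := fun a b => hdisj a b
  have hunion : ((⋃ a, cellsFull m (Q a)).ncard : ℤ) ≤ ∑ a, ((m : ℤ) + Q a m - Q a 0) :=
    calc ((⋃ a, cellsFull m (Q a)).ncard : ℤ) ≤ ∑ a, ((cellsFull m (Q a)).ncard : ℤ) := by
          exact_mod_cast Set.ncard_iUnion_le_of_fintype _
      _ ≤ ∑ a, ((m : ℤ) + Q a m - Q a 0) := sum_le_sum fun a _ => ncard_cellsFull_le (hmono a)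
  have hends : ∑ a, ((Q a m : ℤ) - Q a 0) ≤ i * (n - i) := by
    simpa using sum_sub_le_of_injective (g := fun a => (Q a m : ℤ)) (h := fun a => (Q a 0 : ℤ))
      (Nat.cast_injective.comp (injective_apply_last_of_pairwise_disjoint hm hmono hpair))
      (Nat.cast_injective.comp (injective_apply_zero_of_pairwise_disjoint hm hmono hpair))
      (c := n) (d := 1) (fun a => by exact_mod_cast ((hQ a).1 m le_rfl).2)
      (fun a => by exact_mod_cast ((hQ a).1 0 (Nat.zero_le m)).1)
  have hsplit : ∑ a, ((m : ℤ) + Q a m - Q a 0) = i * m + ∑ a, ((Q a m : ℤ) - Q a 0) := by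
    simp only [add_sub_assoc, sum_add_distrib, sum_const, card_univ, Fintype.card_fin, nsmul_eq_mul]
  zify [hin, (by omega : i ≤ m + n)]
  linarith

/-- If `I₁,…,I_i` are increasing polyominoes fully defined on `{0,…,m}` with
pairwise disjoint cell sets and `i ≤ n`, then the total number of covered
cells is at most `i(m + n - i)`. -/
theorem stmt16 (m n i : ℕ) (hm : 1 ≤ m) (hn : 1 ≤ n) (hi : 1 ≤ i) (hin : i ≤ n)
    (Q : Fin i → (ℕ → ℕ)) (hQ : ∀ a, IncFull m n (Q a))
    (hdisj : ∀ a b, a ≠ b → Disjoint (cellsFull m (Q a)) (cellsFull m (Q b))) :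
    (⋃ a, cellsFull m (Q a)).ncard ≤ i * (m + n - i) :=
  stmt16_general m n i hm hin Q hQ hdisj
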